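/- arXiv:1812.01838 — 3 statements merged into one kernel-verified Lean document; each statement's English description precedes it below -/
import Mathlib

section
/- Let h : ℝ → ℝ be a C¹ function with h' ≥ 0, and define H(t) = ∫₀ᵗ √(h'(τ)) dτ. Then for all a, b ∈ ℝ, (H(a) - H(b))² ≤ (a - b) * (h(a) - h(b)). -/
/-!
Writing `H a - H b = ∫_b^a √h'` and `h a - h b = ∫_b^a h' = ∫_b^a (√h')²` (fundamental theorem of
calculus), the claim is the Cauchy–Schwarz inequality `(∫_b^a g)² ≤ (a - b) ∫_b^a g²` for
`g = √h'`. The latter follows because `c ↦ ∫_b^a (g - c)²` is a nonnegative quadratic polynomial,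
so its discriminant is nonpositive.
-/

open MeasureTheory intervalIntegral

theorem sq_intervalIntegral_le_mul_of_le {f : ℝ → ℝ} {a b : ℝ} (hab : a ≤ b)
    (hf : IntervalIntegrable f volume a b)
    (hf2 : IntervalIntegrable (fun x => f x ^ 2) volume a b) :
    (∫ x in a..b, f x) ^ 2 ≤ (b - a) * ∫ x in a..b, f x ^ 2 := by
  have hquad : ∀ c : ℝ,
      0 ≤ (b - a) * (c * c) + (-2 * ∫ x in a..b, f x) * c + ∫ x in a..b, f x ^ 2 := by
    intro c
    have hexpand : ∫ x in a..b, (f x - c) ^ 2 =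
        (b - a) * (c * c) + (-2 * ∫ x in a..b, f x) * c + ∫ x in a..b, f x ^ 2 := by
      have hlin : (fun x => (f x - c) ^ 2) = fun x => f x ^ 2 - 2 * c * f x + c ^ 2 := by
        ext x; ring
      rw [hlin, integral_add (hf2.sub (hf.const_mul _)) intervalIntegrable_const,
        integral_sub hf2 (hf.const_mul _), intervalIntegral.integral_const_mul, intervalIntegral.integral_const,
        smul_eq_mul]
      ring
    rw [← hexpand]
    exact integral_nonneg hab fun x _ => sq_nonneg _
  have hdiscrim := discrim_le_zero hquad
  rw [discrim] at hdiscrim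
  linarith

theorem sq_intervalIntegral_le_mul {f : ℝ → ℝ} {a b : ℝ}
    (hf : IntervalIntegrable f volume a b)
    (hf2 : IntervalIntegrable (fun x => f x ^ 2) volume a b) :
    (∫ x in a..b, f x) ^ 2 ≤ (b - a) * ∫ x in a..b, f x ^ 2 := by
  rcases le_total a b with hab | hba
  · exact sq_intervalIntegral_le_mul_of_le hab hf hf2
  · have := sq_intervalIntegral_le_mul_of_le hba hf.symm hf2.symm
    rw [integral_symm a b, integral_symm a b, neg_sq] at this
    linarith

theorem stmt_1 (h h' : ℝ → ℝ) (hderiv : ∀ x, HasDerivAt h (h' x) x)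
    (hcont : Continuous h') (hpos : ∀ x, 0 ≤ h' x)
    (H : ℝ → ℝ) (hH : ∀ t, H t = ∫ τ in (0:ℝ)..t, Real.sqrt (h' τ))
    (a b : ℝ) :
    (H a - H b) ^ 2 ≤ (a - b) * (h a - h b) := by
  have hsqrt : Continuous fun τ => Real.sqrt (h' τ) := hcont.sqrt
  have hHab : H a - H b = ∫ τ in b..a, Real.sqrt (h' τ) := by
    rw [hH, hH, integral_interval_sub_left (hsqrt.intervalIntegrable 0 a)
      (hsqrt.intervalIntegrable 0 b)]
  have hhab : h a - h b = ∫ τ in b..a, Real.sqrt (h' τ) ^ 2 := by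
    simp only [Real.sq_sqrt (hpos _)]
    rw [integral_eq_sub_of_hasDerivAt (fun x _ => hderiv x) (hcont.intervalIntegrable b a)]
  rw [hHab, hhab]
  exact sq_intervalIntegral_le_mul (hsqrt.intervalIntegrable b a)
    ((hsqrt.pow 2).intervalIntegrable b a)
end

section
/- Let X_k be a finite-dimensional subspace of a normed space X₀ continuously embedded in L²(Ω) for a finite-measure set Ω, and let l > 0. Then there exists R > 0 such that for all u ∈ X_k with ‖u‖ ≤ R, one has (1/2)∫_Ω |u|² dx ≥ ∫_{{|u| > l}} |u|² dx. -/
/-!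
On a finite-dimensional subspace `F` of `L²(μ)` all norms are equivalent, so expanding in a basis
gives one square-integrable `g` with `|f| ≤ ‖f‖₂ · g` a.e. for every `f ∈ F`. If `‖f‖₂ ≤ l / N`, the
set `{|f| > l}` lies in `{g > N}`, whence `∫_{|f| > l} |f|² ≤ ‖f‖₂² ∫_{g > N} g²`, and the last
integral is at most `1/2` once `N` is large. Elements of `K` are sent to `L²` by a linear map,
continuous because `K` is finite-dimensional, so small elements of `K` have small images.
-/

open MeasureTheory Filter Topology
open scoped ENNReal

theorem Module.Basis.abs_repr_le {E ι : Type*} [NormedAddCommGroup E] [NormedSpace ℝ E]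
    [Fintype ι] (b : Module.Basis ι ℝ E) (v : E) (i : ι) :
    |b.repr v i| ≤ ‖(b.equivFunL : E →L[ℝ] ι → ℝ)‖ * ‖v‖ := by
  calc |b.repr v i| = ‖b.equivFunL v i‖ := by simp [Real.norm_eq_abs]
    _ ≤ ‖b.equivFunL v‖ := norm_le_pi_norm _ i
    _ ≤ _ := (b.equivFunL : E →L[ℝ] ι → ℝ).le_opNorm v

namespace MeasureTheory

variable {α : Type*} [MeasurableSpace α] {μ : Measure α}

theorem Lp.coeFn_sum {E : Type*} [NormedAddCommGroup E] {p : ℝ≥0∞} {ι : Type*}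
    (s : Finset ι) (f : ι → Lp E p μ) : ⇑(∑ i ∈ s, f i) =ᵐ[μ] ∑ i ∈ s, ⇑(f i) := by
  classical
  induction s using Finset.induction_on with
  | empty => simpa using Lp.coeFn_zero E p μ
  | insert i s hi ih =>
    rw [Finset.sum_insert hi, Finset.sum_insert hi]
    exact (Lp.coeFn_add _ _).trans (EventuallyEq.rfl.add ih)

theorem exists_memLp_ae_abs_le_norm_mul {p : ℝ≥0∞} [Fact (1 ≤ p)]
    (F : Submodule ℝ (Lp ℝ p μ)) [FiniteDimensional ℝ F] :
    ∃ g : α → ℝ, Measurable g ∧ MemLp g p μ ∧ ∀ f ∈ F, ∀ᵐ x ∂μ, |f x| ≤ ‖f‖ * g x := by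
  let b := Module.finBasis ℝ F
  set C := ‖(b.equivFunL : F →L[ℝ] Fin (Module.finrank ℝ F) → ℝ)‖
  refine ⟨fun x => C * ∑ i, |(b i : Lp ℝ p μ) x|, ?_, ?_, fun f hf => ?_⟩
  · exact (Finset.measurable_sum _ fun i _ => (Lp.stronglyMeasurable _).measurable.abs).const_mul C
  · exact (memLp_finsetSum _ fun i _ => (Lp.memLp (b i : Lp ℝ p μ)).abs).const_mul C
  · let v : F := ⟨f, hf⟩
    have hv : f = ∑ i, b.repr v i • (b i : Lp ℝ p μ) := by
      conv_lhs => rw [show f = v from rfl, ← b.sum_repr v]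
      push_cast
      rfl
    have hsmul :
        ∀ᵐ x ∂μ, ∀ i, (b.repr v i • (b i : Lp ℝ p μ)) x = b.repr v i * (b i : Lp ℝ p μ) x :=
      ae_all_iff.2 fun i => Lp.coeFn_smul _ _
    filter_upwards [hv ▸ Lp.coeFn_sum Finset.univ fun i => b.repr v i • (b i : Lp ℝ p μ), hsmul]
      with x hsum hsmul
    rw [hsum, Finset.sum_apply, Finset.mul_sum, Finset.mul_sum]
    refine (Finset.abs_sum_le_sum_abs _ _).trans (Finset.sum_le_sum fun i _ => ?_)
    rw [hsmul, abs_mul, mul_left_comm, ← mul_assoc]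
    exact mul_le_mul_of_nonneg_right (b.abs_repr_le v i) (abs_nonneg _)

theorem L2.norm_sq_eq_integral_sq_abs (f : Lp ℝ 2 μ) : ‖f‖ ^ 2 = ∫ x, |f x| ^ 2 ∂μ := by
  rw [← real_inner_self_eq_norm_sq, L2.inner_def]
  simp only [real_inner_self_eq_norm_sq, Real.norm_eq_abs]

theorem tendsto_setIntegral_lt_atTop {φ g : α → ℝ} (hφ : Integrable φ μ) (hg : Measurable g) :
    Tendsto (fun N : ℝ => ∫ x in {x | N < g x}, φ x ∂μ) atTop (𝓝 0) := by
  have hempty : ⋂ N : ℝ, {x | N < g x} = ∅ :=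
    Set.iInter_eq_empty_iff.2 fun x => ⟨g x, lt_irrefl (g x)⟩
  simpa [hempty] using tendsto_setIntegral_of_antitone (s := fun N : ℝ => {x | N < g x})
    (fun N => measurableSet_lt measurable_const hg)
    (fun _ _ hMN _ hx => hMN.trans_lt hx) ⟨0, hφ.integrableOn⟩

theorem setIntegral_sq_abs_gt_le {f g : α → ℝ} {c l N : ℝ}
    (hf : Integrable (fun x => |f x| ^ 2) μ) (hg : Integrable (fun x => g x ^ 2) μ)
    (hc : 0 ≤ c) (hcN : c * N ≤ l) (hfg : ∀ᵐ x ∂μ, |f x| ≤ c * g x) :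
    ∫ x in {x | l < |f x|}, |f x| ^ 2 ∂μ ≤ c ^ 2 * ∫ x in {x | N < g x}, g x ^ 2 ∂μ := by
  have hsub : {x | l < |f x|} ≤ᵐ[μ] {x | N < g x} := by
    filter_upwards [hfg] with x hx (hlx : l < |f x|)
    show N < g x
    by_contra! hgN
    linarith [mul_le_mul_of_nonneg_left hgN hc]
  calc ∫ x in {x | l < |f x|}, |f x| ^ 2 ∂μ ≤ ∫ x in {x | N < g x}, |f x| ^ 2 ∂μ :=
        setIntegral_mono_set hf.integrableOn (ae_of_all _ fun x => by positivity) hsub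
    _ ≤ ∫ x in {x | N < g x}, c ^ 2 * g x ^ 2 ∂μ := by
        refine setIntegral_mono_ae hf.integrableOn (hg.const_mul _).integrableOn ?_
        filter_upwards [hfg] with x hx
        rw [← mul_pow]
        exact pow_le_pow_left₀ (abs_nonneg _) hx 2
    _ = c ^ 2 * ∫ x in {x | N < g x}, g x ^ 2 ∂μ := integral_const_mul _ _

theorem exists_pos_forall_norm_le_setIntegral_gt_le_half
    (F : Submodule ℝ (Lp ℝ 2 μ)) [FiniteDimensional ℝ F] {l : ℝ} (hl : 0 < l) :
    ∃ δ > 0, ∀ f ∈ F, ‖f‖ ≤ δ →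
      ∫ x in {x | l < |f x|}, |f x| ^ 2 ∂μ ≤ 1 / 2 * ∫ x, |f x| ^ 2 ∂μ := by
  obtain ⟨g, hg, hg₂, hdom⟩ := exists_memLp_ae_abs_le_norm_mul F
  obtain ⟨N, hN, hNpos⟩ := (((tendsto_setIntegral_lt_atTop hg₂.integrable_sq hg).eventually
    (ge_mem_nhds one_half_pos)).and (eventually_gt_atTop 0)).exists
  refine ⟨l / N, by positivity, fun f hf hfδ => ?_⟩
  have hf₂ : Integrable (fun x => |f x| ^ 2) μ := by
    simpa only [sq_abs] using (Lp.memLp f).integrable_sq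
  calc ∫ x in {x | l < |f x|}, |f x| ^ 2 ∂μ ≤ ‖f‖ ^ 2 * ∫ x in {x | N < g x}, g x ^ 2 ∂μ :=
        setIntegral_sq_abs_gt_le hf₂ hg₂.integrable_sq (norm_nonneg f)
          ((le_div_iff₀ hNpos).1 hfδ) (hdom f hf)
    _ ≤ ‖f‖ ^ 2 * (1 / 2) := by gcongr
    _ = 1 / 2 * ∫ x, |f x| ^ 2 ∂μ := by rw [L2.norm_sq_eq_integral_sq_abs]; ring

theorem exists_pos_forall_norm_le_setIntegral_gt_le_half_of_linearMap {E : Type*}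
    [NormedAddCommGroup E] [NormedSpace ℝ E] [FiniteDimensional ℝ E]
    (T : E →ₗ[ℝ] Lp ℝ 2 μ) {l : ℝ} (hl : 0 < l) :
    ∃ R > 0, ∀ v, ‖v‖ ≤ R →
      ∫ x in {x | l < |T v x|}, |T v x| ^ 2 ∂μ ≤ 1 / 2 * ∫ x, |T v x| ^ 2 ∂μ := by
  obtain ⟨δ, hδ, hF⟩ := exists_pos_forall_norm_le_setIntegral_gt_le_half (LinearMap.range T) hl
  let T' : E →L[ℝ] Lp ℝ 2 μ := LinearMap.toContinuousLinearMap T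
  refine ⟨δ / (‖T'‖ + 1), by positivity, fun v hv => hF _ (LinearMap.mem_range_self T v) ?_⟩
  calc ‖T v‖ = ‖T' v‖ := rfl
    _ ≤ (‖T'‖ + 1) * ‖v‖ := (T'.le_opNorm v).trans (by gcongr; linarith)
    _ ≤ δ := by rwa [← le_div_iff₀' (by positivity)]

variable (μ) in
def memLpSubmodule (p : ℝ≥0∞) : Submodule ℝ (α → ℝ) where
  carrier := {f | MemLp f p μ}
  add_mem' := MemLp.add
  zero_mem' := MemLp.zero
  smul_mem' c _ hf := hf.const_smul c

def memLpSubmodule.toLp {p : ℝ≥0∞} : memLpSubmodule μ p →ₗ[ℝ] Lp ℝ p μ where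
  toFun f := MemLp.toLp f f.2
  map_add' f g := MemLp.toLp_add f.2 g.2
  map_smul' c f := MemLp.toLp_const_smul c f.2

theorem setIntegral_sq_abs_gt_congr_ae {f g : α → ℝ} (hfg : f =ᵐ[μ] g) (l : ℝ) :
    ∫ x in {x | l < |f x|}, |f x| ^ 2 ∂μ = ∫ x in {x | l < |g x|}, |g x| ^ 2 ∂μ := by
  have hset : {x | l < |f x|} =ᵐ[μ] {x | l < |g x|} := by
    filter_upwards [hfg] with x hx
    change (l < |f x|) = (l < |g x|)
    rw [hx]
  rw [setIntegral_congr_set hset]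
  exact integral_congr_ae (ae_restrict_of_ae (hfg.fun_comp fun y => |y| ^ 2))

theorem integrable_sq_abs_of_integrableOn_gt [IsFiniteMeasure μ] {f : α → ℝ} (hf : Measurable f)
    {l : ℝ} (h : IntegrableOn (fun x => |f x| ^ 2) {x | l < |f x|} μ) :
    Integrable (fun x => |f x| ^ 2) μ := by
  have hs : MeasurableSet {x | l < |f x|} := measurableSet_lt measurable_const hf.abs
  have hcompl : IntegrableOn (fun x => |f x| ^ 2) {x | l < |f x|}ᶜ μ := by
    refine Integrable.mono' (integrable_const (l ^ 2)) (hf.abs.pow_const 2).aestronglyMeasurable ?_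
    rw [ae_restrict_iff' hs.compl]
    filter_upwards with x (hx : ¬l < |f x|)
    rw [Real.norm_of_nonneg (by positivity)]
    exact pow_le_pow_left₀ (abs_nonneg _) (not_lt.1 hx) 2
  simpa using h.union hcompl

end MeasureTheory

theorem stmt_10_general {α : Type*} [MeasurableSpace α] (μ : Measure α) [IsFiniteMeasure μ]
    {X₀ : Type*} [NormedAddCommGroup X₀] [NormedSpace ℝ X₀]
    (ι : X₀ →ₗ[ℝ] α → ℝ) (hmeas : ∀ u, Measurable (ι u))
    (K : Submodule ℝ X₀) [FiniteDimensional ℝ K]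
    (l : ℝ) (hl : 0 < l) :
    ∃ R : ℝ, 0 < R ∧ ∀ u ∈ K, ‖u‖ ≤ R →
      (∫ x in {x | l < |ι u x|}, |ι u x| ^ 2 ∂μ) ≤ (1 / 2) * ∫ x, |ι u x| ^ 2 ∂μ := by
  let V := K ⊓ (memLpSubmodule μ 2).comap ι
  have : FiniteDimensional ℝ V := Submodule.finiteDimensional_of_le inf_le_left
  let T := memLpSubmodule.toLp ∘ₗ (ι.domRestrict V).codRestrict _ fun v => v.2.2
  obtain ⟨R, hR, hT⟩ := exists_pos_forall_norm_le_setIntegral_gt_le_half_of_linearMap T hl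
  refine ⟨R, hR, fun u hu huR => ?_⟩
  by_cases hu₂ : MemLp (ι u) 2 μ
  · have huV : u ∈ V := ⟨hu, hu₂⟩
    have hTu : T ⟨u, huV⟩ =ᵐ[μ] ι u := MemLp.coeFn_toLp hu₂
    have hTu₂ : (fun x => |T ⟨u, huV⟩ x| ^ 2) =ᵐ[μ] fun x => |ι u x| ^ 2 :=
      hTu.fun_comp fun y => |y| ^ 2
    rw [← setIntegral_sq_abs_gt_congr_ae hTu, ← integral_congr_ae hTu₂]
    exact hT _ huR
  · -- `μ` is finite, so the non-integrability of `|ι u|²` sits in the tail,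
    -- whose integral is then a junk `0`.
    have hnot : ¬Integrable (fun x => |ι u x| ^ 2) μ := by
      simpa only [sq_abs, ← memLp_two_iff_integrable_sq (hmeas u).aestronglyMeasurable] using hu₂
    rw [integral_undef (mt (integrable_sq_abs_of_integrableOn_gt (hmeas u)) hnot)]
    exact mul_nonneg one_half_pos.le (integral_nonneg fun x => by positivity)

theorem stmt_10 {α : Type*} [MeasurableSpace α] (μ : Measure α) [IsFiniteMeasure μ]
    {X₀ : Type*} [NormedAddCommGroup X₀] [NormedSpace ℝ X₀]
    (ι : X₀ →ₗ[ℝ] α → ℝ) (hmeas : ∀ u, Measurable (ι u))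
    (C : ℝ) (hC : 0 ≤ C) (hembed : ∀ u : X₀, (∫ x, |ι u x| ^ 2 ∂μ) ≤ C * ‖u‖ ^ 2)
    (K : Submodule ℝ X₀) [FiniteDimensional ℝ K]
    (l : ℝ) (hl : 0 < l) :
    ∃ R : ℝ, 0 < R ∧ ∀ u ∈ K, ‖u‖ ≤ R →
      (∫ x in {x | l < |ι u x|}, |ι u x| ^ 2 ∂μ) ≤ (1 / 2) * ∫ x, |ι u x| ^ 2 ∂μ :=
  stmt_10_general μ ι hmeas K l hl
end

section
/- Let (a_n) be a sequence of positive reals, η > 1, and suppose a_{n+1} ≤ M^{q/τ_n} (τ_n/q)^{q/τ_n} a_n for all n, where τ_n = q η^n, q > 0, M ≥ 1. Then a_n ≤ M^{η/(η−1)} · η^{η/(η−1)²} · a_0 for all n. -/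
/-!
Substituting `r = η⁻¹`, the `n`-th step multiplies by `M ^ r ^ n * η ^ (n * r ^ n)`, so after
`n` steps `a n ≤ M ^ (∑ r ^ i) * η ^ (∑ i * r ^ i) * a 0`. The two partial sums are bounded by the
full series `∑ r ^ i = η / (η - 1)` and `∑ i * r ^ i = r / (1 - r) ^ 2 = η / (η - 1) ^ 2`.
-/

open Finset

theorem le_prod_range_mul_of_succ_le {a c : ℕ → ℝ} (hc : ∀ n, 0 ≤ c n)
    (h : ∀ n, a (n + 1) ≤ c n * a n) (n : ℕ) : a n ≤ (∏ i ∈ range n, c i) * a 0 := by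
  induction n with
  | zero => simp
  | succ n ih =>
    calc a (n + 1) ≤ c n * a n := h n
      _ ≤ c n * ((∏ i ∈ range n, c i) * a 0) := mul_le_mul_of_nonneg_left ih (hc n)
      _ = (∏ i ∈ range (n + 1), c i) * a 0 := by rw [prod_range_succ]; ring

theorem prod_range_rpow_mul_rpow {x y : ℝ} (hx : 0 < x) (hy : 0 < y) (s t : ℕ → ℝ) (n : ℕ) :
    ∏ i ∈ range n, x ^ s i * y ^ t i = x ^ (∑ i ∈ range n, s i) * y ^ (∑ i ∈ range n, t i) := by
  rw [prod_mul_distrib, Real.rpow_sum_of_pos hx, Real.rpow_sum_of_pos hy]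

theorem sum_range_pow_le_inv_one_sub {r : ℝ} (hr₀ : 0 ≤ r) (hr₁ : r < 1) (n : ℕ) :
    ∑ i ∈ range n, r ^ i ≤ (1 - r)⁻¹ := by
  simpa [← Nat.Ico_zero_eq_range] using geom_sum_Ico_le_of_lt_one (m := 0) (n := n) hr₀ hr₁

theorem sum_range_coe_mul_pow_le {r : ℝ} (hr₀ : 0 ≤ r) (hr₁ : r < 1) (n : ℕ) :
    ∑ i ∈ range n, (i : ℝ) * r ^ i ≤ r / (1 - r) ^ 2 := by
  refine sum_le_hasSum _ (fun i _ => by positivity) (hasSum_coe_mul_geometric_of_norm_lt_one ?_)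
  rwa [Real.norm_of_nonneg hr₀]

theorem moser_factor_eq {η q : ℝ} (hη : 0 < η) (hq : q ≠ 0) (M : ℝ) (n : ℕ) :
    M ^ (q / (q * η ^ n)) * ((q * η ^ n) / q) ^ (q / (q * η ^ n)) =
      M ^ (η⁻¹ ^ n) * η ^ ((n : ℝ) * η⁻¹ ^ n) := by
  have hexp : q / (q * η ^ n) = η⁻¹ ^ n := by rw [inv_pow, div_mul_cancel_left₀ hq]
  rw [hexp, mul_div_cancel_left₀ _ hq, Real.rpow_natCast_mul hη.le]

theorem stmt_16 (a : ℕ → ℝ) (ha : ∀ n, 0 < a n) (η q M : ℝ)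
    (hη : 1 < η) (hq : 0 < q) (hM : 1 ≤ M)
    (h : ∀ n : ℕ, a (n + 1) ≤
      M ^ (q / (q * η ^ n)) * ((q * η ^ n) / q) ^ (q / (q * η ^ n)) * a n) :
    ∀ n : ℕ, a n ≤ M ^ (η / (η - 1)) * η ^ (η / (η - 1) ^ 2) * a 0 := by
  intro n
  have hη₀ : 0 < η := zero_lt_one.trans hη
  have hr₀ : 0 ≤ η⁻¹ := inv_nonneg.mpr hη₀.le
  have hr₁ : η⁻¹ < 1 := inv_lt_one_of_one_lt₀ hη
  have hsub : η - 1 ≠ 0 := (sub_pos.mpr hη).ne'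
  have hsum_pow : (1 - η⁻¹)⁻¹ = η / (η - 1) := by field_simp
  have hsum_coe_mul : η⁻¹ / (1 - η⁻¹) ^ 2 = η / (η - 1) ^ 2 := by field_simp
  have hstep : ∀ n, a (n + 1) ≤ (M ^ (η⁻¹ ^ n) * η ^ ((n : ℝ) * η⁻¹ ^ n)) * a n := fun n => by
    simpa only [moser_factor_eq hη₀ hq.ne'] using h n
  calc a n ≤ (∏ i ∈ range n, M ^ (η⁻¹ ^ i) * η ^ ((i : ℝ) * η⁻¹ ^ i)) * a 0 :=
        le_prod_range_mul_of_succ_le (fun _ => by positivity) hstep n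
    _ = M ^ (∑ i ∈ range n, η⁻¹ ^ i) * η ^ (∑ i ∈ range n, (i : ℝ) * η⁻¹ ^ i) * a 0 := by
        rw [prod_range_rpow_mul_rpow (zero_lt_one.trans_le hM) hη₀]
    _ ≤ M ^ (η / (η - 1)) * η ^ (η / (η - 1) ^ 2) * a 0 := by
        gcongr
        · exact (ha 0).le
        · exact hsum_pow ▸ sum_range_pow_le_inv_one_sub hr₀ hr₁ n
        · exact hη.le
        · exact hsum_coe_mul ▸ sum_range_coe_mul_pow_le hr₀ hr₁ n
end
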